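/- Properties of row and column projection matrices of a singular-value-thresholded matrix: Let M ∈ ℝ^{n×p}, λ ≥ 0, and M^{(λ)} = SVT_λ(M). Define Π^row_A = A^† A and Π^col_A = A A^† for any matrix A. Then: (1) Π^row_{M^{(λ)}} is an orthogonal projection in ℝ^p with rank(Π^row_{M^{(λ)}}) = rank(M^{(λ)}); (2) Π^col_{M^{(λ)}} is an orthogonal projection in ℝ^n with rank(Π^col_{M^{(λ)}}) = rank(M^{(λ)}); (3) M · Π^row_{M^{(λ)}} · M^† = Π^col_{M^{(λ)}} and M^† · Π^col_{M^{(λ)}} · M = Π^row_{M^{(λ)}}. -/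

import Mathlib

open MeasureTheory Matrix Filter
open scoped ENNReal NNReal Topology Classical

noncomputable section

namespace FrechetPCR

/-- The four Penrose conditions characterizing the Moore–Penrose pseudoinverse. -/
def IsMoorePenrose {n m : ℕ} (A : Matrix (Fin n) (Fin m) ℝ) (B : Matrix (Fin m) (Fin n) ℝ) : Prop :=
  A * B * A = A ∧ B * A * B = B ∧ (A * B)ᵀ = A * B ∧ (B * A)ᵀ = B * A

/-- The Moore–Penrose pseudoinverse of a real matrix (it exists and is unique). -/
def pinv {n m : ℕ} (A : Matrix (Fin n) (Fin m) ℝ) : Matrix (Fin m) (Fin n) ℝ :=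
  if h : ∃ B, IsMoorePenrose A B then h.choose else 0

/-- Spectral projection of a symmetric matrix onto the span of eigenvectors
with eigenvalue > t. -/
def specProjGT {m : ℕ} (S : Matrix (Fin m) (Fin m) ℝ) (t : ℝ) : Matrix (Fin m) (Fin m) ℝ :=
  if hS : S.IsHermitian then
    (hS.eigenvectorUnitary : Matrix (Fin m) (Fin m) ℝ) *
      Matrix.diagonal (fun i => if t < hS.eigenvalues i then (1 : ℝ) else 0) *
      star (hS.eigenvectorUnitary : Matrix (Fin m) (Fin m) ℝ)
  else 0

/-- Hard singular value thresholding: retains the part of `A` corresponding to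
singular values exceeding `l` (for `l ≥ 0`): if `A = Σ sᵢ uᵢ vᵢᵀ` is an SVD then
`SVT l A = Σ sᵢ 1{sᵢ > l} uᵢ vᵢᵀ = A · Π` where `Π` is the spectral projection of
`AᵀA` onto eigenvalues `> l²`. -/
def SVT {n m : ℕ} (l : ℝ) (A : Matrix (Fin n) (Fin m) ℝ) : Matrix (Fin n) (Fin m) ℝ :=
  A * specProjGT (Aᵀ * A) (l ^ 2)

/-- Mahalanobis seminorm of `v` induced by the positive semidefinite matrix `S`. -/
def mahal {p : ℕ} (S : Matrix (Fin p) (Fin p) ℝ) (v : Fin p → ℝ) : ℝ :=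
  Real.sqrt (v ⬝ᵥ pinv S *ᵥ v)

/-- Euclidean (ℓ²) norm of a vector. -/
def euclNorm {n : ℕ} (v : Fin n → ℝ) : ℝ :=
  Real.sqrt (∑ i, v i ^ 2)

/-- Spectral (ℓ²-operator) norm of a matrix. -/
def spectralNorm {n m : ℕ} (A : Matrix (Fin n) (Fin m) ℝ) : ℝ :=
  ‖(Matrix.toEuclideanLin A).toContinuousLinearMap‖

/-- `σ^λ(A)`: the smallest singular value of `A` exceeding `l`
(with junk value `sInf ∅ = 0` when no singular value exceeds `l`). -/
def sigmaGT {n m : ℕ} (A : Matrix (Fin n) (Fin m) ℝ) (l : ℝ) : ℝ :=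
  sInf {s : ℝ | 0 ≤ s ∧ l < s ∧ s ^ 2 ∈ spectrum ℝ (Aᵀ * A)}

/-- Covariate mean of a measure on ℝ^p × M. -/
def covMean {p : ℕ} {M : Type*} [MeasurableSpace M] (ν : Measure ((Fin p → ℝ) × M)) :
    Fin p → ℝ :=
  ∫ z, z.1 ∂ν

/-- Covariate covariance of a measure on ℝ^p × M. -/
def covCov {p : ℕ} {M : Type*} [MeasurableSpace M] (ν : Measure ((Fin p → ℝ) × M)) :
    Matrix (Fin p) (Fin p) ℝ :=
  Matrix.of fun i j => ∫ z, (z.1 i - covMean ν i) * (z.1 j - covMean ν j) ∂ν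

/-- λ-regularized weight function
`w^λ_ν(x',x) = 1 + (x'−μ_ν)ᵀ [SVT_λ(Σ_ν)]† (x−μ_ν)`. -/
def weight {p : ℕ} {M : Type*} [MeasurableSpace M] (l : ℝ) (ν : Measure ((Fin p → ℝ) × M))
    (x' x : Fin p → ℝ) : ℝ :=
  1 + (x' - covMean ν) ⬝ᵥ pinv (SVT l (covCov ν)) *ᵥ (x - covMean ν)

/-- λ-regularized Fréchet risk `R^λ_ν(y;x) = E_ν[ w^λ_ν(X,x) · d²(Y,y) ]`. -/
def risk {p : ℕ} {M : Type*} [MetricSpace M] [MeasurableSpace M] (l : ℝ)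
    (ν : Measure ((Fin p → ℝ) × M)) (y : M) (x : Fin p → ℝ) : ℝ :=
  ∫ z, weight l ν z.1 x * dist z.2 y ^ 2 ∂ν

/-- Empirical measure of a finite dataset. -/
def empOf {E : Type*} [MeasurableSpace E] {n : ℕ} (D : Fin n → E) : Measure E :=
  (n : ℝ≥0∞)⁻¹ • ∑ i, Measure.dirac (D i)

/-- Empirical measure of the first `n` elements of a sequence of observations. -/
def empSeq {E : Type*} [MeasurableSpace E] (D : ℕ → E) (n : ℕ) : Measure E :=
  (n : ℝ≥0∞)⁻¹ • ∑ i ∈ Finset.range n, Measure.dirac (D i)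

/-- ε-covering number of a set in a metric space: the minimal cardinality of a cover
by closed ε-balls (`⊤` if no finite cover exists). -/
def coveringNumber {M : Type*} [MetricSpace M] (S : Set M) (ε : ℝ) : ℝ≥0∞ :=
  ⨅ (t : Finset M) (_ : S ⊆ ⋃ y ∈ t, Metric.closedBall y ε), (t.card : ℝ≥0∞)

/-- The n×n centering matrix `I − (1/n) 1ₙ 1ₙᵀ`. -/
def centering (n : ℕ) : Matrix (Fin n) (Fin n) ℝ :=
  1 - (n : ℝ)⁻¹ • Matrix.of fun _ _ => (1 : ℝ)

/-! Write `S = AᵀA`. Then `SVT_λ A = A q(S)` with `q = 1{· > λ²}`, and more generally for every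
`0/1`-valued `g` the Penrose conditions identify `(A g(S))† = (g · x⁻¹)(S) Aᵀ`, using `0⁻¹ = 0`
for the kernel of `S` (on which `A` vanishes). Every product in (3) is then of the form `h(S)` or
`A h(S) Aᵀ`, so each identity reduces to a pointwise identity between real functions. Parts (1) and (2) hold for the pseudoinverse of any matrix. -/

section FunctionalCalculus

variable {ι : Type*} [Fintype ι] [DecidableEq ι]

lemma cfc_mul_cfc (S : Matrix ι ι ℝ) (f g : ℝ → ℝ) :
    cfc f S * cfc g S = cfc (fun x => f x * g x) S :=
  (cfc_mul f g S (S.finite_spectrum.continuousOn f) (S.finite_spectrum.continuousOn g)).symm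

lemma cfc_mul_cfc_mul {κ : Type*} (S : Matrix ι ι ℝ) (f g : ℝ → ℝ) (X : Matrix ι κ ℝ) :
    cfc f S * (cfc g S * X) = cfc (fun x => f x * g x) S * X := by
  rw [← Matrix.mul_assoc, cfc_mul_cfc]

lemma self_mul_cfc {S : Matrix ι ι ℝ} (hS : IsSelfAdjoint S) (f : ℝ → ℝ) :
    S * cfc f S = cfc (fun x => x * f x) S := by
  simpa only [cfc_id' ℝ S hS] using cfc_mul_cfc S (fun x => x) f

lemma cfc_mul_self {S : Matrix ι ι ℝ} (hS : IsSelfAdjoint S) (f : ℝ → ℝ) :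
    cfc f S * S = cfc (fun x => f x * x) S := by
  simpa only [cfc_id' ℝ S hS] using cfc_mul_cfc S f (fun x => x)

lemma transpose_cfc (S : Matrix ι ι ℝ) (f : ℝ → ℝ) : (cfc f S)ᵀ = cfc f S := by
  rw [← conjTranspose_eq_transpose_of_trivial]
  exact cfc_predicate (p := IsSelfAdjoint) f S

lemma specProjGT_eq_cfc {m : ℕ} {S : Matrix (Fin m) (Fin m) ℝ} (hS : S.IsHermitian) (t : ℝ) :
    specProjGT S t = cfc (fun x => if t < x then 1 else 0) S := by
  rw [hS.cfc_eq, specProjGT, dif_pos hS, IsHermitian.cfc, Unitary.conjStarAlgAut_apply]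
  rfl

end FunctionalCalculus

section MoorePenrose

variable {n m : ℕ} {A : Matrix (Fin n) (Fin m) ℝ} {B C : Matrix (Fin m) (Fin n) ℝ}

theorem IsMoorePenrose.unique (hB : IsMoorePenrose A B) (hC : IsMoorePenrose A C) : B = C := by
  obtain ⟨hB₁, hB₂, hB₃, hB₄⟩ := hB
  obtain ⟨hC₁, hC₂, hC₃, hC₄⟩ := hC
  have hAB : A * B = A * C :=
    calc A * B = (A * C * A * B)ᵀ := by rw [hC₁, hB₃]
    _ = A * B * (A * C) := by rw [Matrix.mul_assoc _ A B, transpose_mul, hB₃, hC₃]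
    _ = A * C := by rw [← Matrix.mul_assoc, hB₁]
  have hBA : B * A = C * A :=
    calc B * A = (B * A * C * A)ᵀ := by rw [Matrix.mul_assoc B A C, Matrix.mul_assoc B, hC₁, hB₄]
    _ = C * A * (B * A) := by rw [Matrix.mul_assoc, transpose_mul, hB₄, hC₄]
    _ = C * A := by rw [Matrix.mul_assoc, ← Matrix.mul_assoc A, hB₁]
  calc B = B * A * B := hB₂.symm
  _ = C * A * C := by rw [Matrix.mul_assoc, hAB, ← Matrix.mul_assoc, hBA]
  _ = C := hC₂

theorem IsMoorePenrose.pinv_eq (hB : IsMoorePenrose A B) : pinv A = B := by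
  have h : ∃ C, IsMoorePenrose A C := ⟨B, hB⟩
  rw [pinv, dif_pos h]
  exact h.choose_spec.unique hB

theorem IsMoorePenrose.isIdempotentElem_inv_mul (hB : IsMoorePenrose A B) :
    IsIdempotentElem (B * A) := by
  rw [IsIdempotentElem, ← Matrix.mul_assoc, hB.2.1]

theorem IsMoorePenrose.isIdempotentElem_mul_inv (hB : IsMoorePenrose A B) :
    IsIdempotentElem (A * B) := by
  rw [IsIdempotentElem, ← Matrix.mul_assoc, hB.1]

theorem IsMoorePenrose.rank_inv_mul (hB : IsMoorePenrose A B) : (B * A).rank = A.rank := by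
  refine le_antisymm (rank_mul_le_right _ _) ?_
  calc A.rank = (A * (B * A)).rank := by rw [← Matrix.mul_assoc, hB.1]
  _ ≤ (B * A).rank := rank_mul_le_right _ _

theorem IsMoorePenrose.rank_mul_inv (hB : IsMoorePenrose A B) : (A * B).rank = A.rank := by
  refine le_antisymm (rank_mul_le_left _ _) ?_
  calc A.rank = (A * B * A).rank := by rw [hB.1]
  _ ≤ (A * B).rank := rank_mul_le_left _ _

end MoorePenrose

section Gram

variable {n m : ℕ} (A : Matrix (Fin n) (Fin m) ℝ)

lemma isSelfAdjoint_transpose_mul_self : IsSelfAdjoint (Aᵀ * A) := by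
  rw [← conjTranspose_eq_transpose_of_trivial]
  exact isHermitian_conjTranspose_mul_self A

lemma transpose_mul_mul_cfc (f : ℝ → ℝ) :
    Aᵀ * (A * cfc f (Aᵀ * A)) = cfc (fun x => x * f x) (Aᵀ * A) := by
  rw [← Matrix.mul_assoc, self_mul_cfc (isSelfAdjoint_transpose_mul_self A)]

lemma mul_cfc_congr {g h : ℝ → ℝ} (hgh : ∀ x ≠ 0, g x = h x) :
    A * cfc g (Aᵀ * A) = A * cfc h (Aᵀ * A) := by
  have hfin := (Aᵀ * A).finite_spectrum
  rw [← sub_eq_zero, ← Matrix.mul_sub, ← cfc_sub g h _ (hfin.continuousOn g) (hfin.continuousOn h),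
    ← conjTranspose_mul_self_mul_eq_zero, conjTranspose_eq_transpose_of_trivial,
    self_mul_cfc (isSelfAdjoint_transpose_mul_self A)]
  have hvanish : (fun x => x * (g x - h x)) = 0 := by
    ext x
    rcases eq_or_ne x 0 with rfl | hx
    · exact zero_mul _
    · rw [hgh x hx, sub_self, mul_zero, Pi.zero_apply]
  rw [hvanish, cfc_zero]

theorem isMoorePenrose_mul_cfc {g : ℝ → ℝ} (hg : ∀ x, IsIdempotentElem (g x)) :
    IsMoorePenrose (A * cfc g (Aᵀ * A)) (cfc (fun x => g x * x⁻¹) (Aᵀ * A) * Aᵀ) := by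
  refine ⟨?_, ?_, ?_, ?_⟩ <;>
    simp only [Matrix.mul_assoc, transpose_mul_mul_cfc, cfc_mul_cfc_mul, cfc_mul_cfc, transpose_mul, transpose_transpose, transpose_cfc]
  · refine mul_cfc_congr A fun x hx => ?_
    grind [(hg x).eq]
  · congr 1
    refine cfc_congr fun x _ => ?_
    grind [(hg x).eq]

theorem isMoorePenrose_cfc_inv_mul_transpose :
    IsMoorePenrose A (cfc (fun x : ℝ => x⁻¹) (Aᵀ * A) * Aᵀ) := by
  simpa [cfc_const_one ℝ (Aᵀ * A) (isSelfAdjoint_transpose_mul_self A)] using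
    isMoorePenrose_mul_cfc A (g := fun _ => 1) fun _ => .one

theorem pinv_eq_cfc_inv_mul_transpose : pinv A = cfc (fun x : ℝ => x⁻¹) (Aᵀ * A) * Aᵀ :=
  (isMoorePenrose_cfc_inv_mul_transpose A).pinv_eq

theorem isMoorePenrose_pinv : IsMoorePenrose A (pinv A) :=
  pinv_eq_cfc_inv_mul_transpose A ▸ isMoorePenrose_cfc_inv_mul_transpose A

variable {A} {g : ℝ → ℝ} {T : Matrix (Fin n) (Fin m) ℝ}

theorem mul_pinv_mul_self_mul_pinv (hg : ∀ x, IsIdempotentElem (g x))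
    (hT : T = A * cfc g (Aᵀ * A)) : A * (pinv T * T) * pinv A = T * pinv T := by
  subst hT
  rw [(isMoorePenrose_mul_cfc A hg).pinv_eq, pinv_eq_cfc_inv_mul_transpose]
  simp only [Matrix.mul_assoc, transpose_mul_mul_cfc, cfc_mul_cfc_mul, cfc_mul_cfc]
  congr 2
  exact cfc_congr fun x _ => by grind [(hg x).eq]

theorem pinv_mul_self_mul_pinv_mul (hg : ∀ x, IsIdempotentElem (g x))
    (hT : T = A * cfc g (Aᵀ * A)) : pinv A * (T * pinv T) * A = pinv T * T := by
  subst hT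
  rw [(isMoorePenrose_mul_cfc A hg).pinv_eq, pinv_eq_cfc_inv_mul_transpose]
  simp only [Matrix.mul_assoc, transpose_mul_mul_cfc, cfc_mul_cfc_mul, cfc_mul_cfc,
    cfc_mul_self (isSelfAdjoint_transpose_mul_self A)]
  exact cfc_congr fun x _ => by grind [(hg x).eq]

end Gram

theorem svt_projection_properties_general
    {n p : ℕ} (A : Matrix (Fin n) (Fin p) ℝ) (l : ℝ) :
    -- (1) Π^row_{A^{(λ)}} is an orthogonal projection of rank = rank A^{(λ)}
    ((pinv (SVT l A) * SVT l A)ᵀ = pinv (SVT l A) * SVT l A ∧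
      (pinv (SVT l A) * SVT l A) * (pinv (SVT l A) * SVT l A) = pinv (SVT l A) * SVT l A ∧
      (pinv (SVT l A) * SVT l A).rank = (SVT l A).rank) ∧
    -- (2) Π^col_{A^{(λ)}} is an orthogonal projection of rank = rank A^{(λ)}
    ((SVT l A * pinv (SVT l A))ᵀ = SVT l A * pinv (SVT l A) ∧
      (SVT l A * pinv (SVT l A)) * (SVT l A * pinv (SVT l A)) = SVT l A * pinv (SVT l A) ∧
      (SVT l A * pinv (SVT l A)).rank = (SVT l A).rank) ∧
    -- (3) A Π^row_{A^{(λ)}} A† = Π^col_{A^{(λ)}} and A† Π^col_{A^{(λ)}} A = Π^row_{A^{(λ)}}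
    (A * (pinv (SVT l A) * SVT l A) * pinv A = SVT l A * pinv (SVT l A) ∧
      pinv A * (SVT l A * pinv (SVT l A)) * A = pinv (SVT l A) * SVT l A) := by
  have hSVT : SVT l A = A * cfc (fun x => if l ^ 2 < x then 1 else 0) (Aᵀ * A) := by
    rw [SVT, specProjGT_eq_cfc (isSelfAdjoint_transpose_mul_self A)]
  have hq : ∀ x : ℝ, IsIdempotentElem (if l ^ 2 < x then (1 : ℝ) else 0) := fun x => by
    split_ifs
    exacts [.one, .zero]
  have hMP := isMoorePenrose_pinv (SVT l A)
  exact ⟨⟨hMP.2.2.2, hMP.isIdempotentElem_inv_mul, hMP.rank_inv_mul⟩,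
    ⟨hMP.2.2.1, hMP.isIdempotentElem_mul_inv, hMP.rank_mul_inv⟩,
    mul_pinv_mul_self_mul_pinv hq hSVT, pinv_mul_self_mul_pinv_mul hq hSVT⟩

/-- **Properties of row and column projection matrices of an SVT-thresholded matrix**
(Lemma D.1). Here `Π^row_A = A† A` and `Π^col_A = A A†`. -/
theorem svt_projection_properties
    {n p : ℕ} (A : Matrix (Fin n) (Fin p) ℝ) (l : ℝ) (hl : 0 ≤ l) :
    -- (1) Π^row_{A^{(λ)}} is an orthogonal projection of rank = rank A^{(λ)}
    ((pinv (SVT l A) * SVT l A)ᵀ = pinv (SVT l A) * SVT l A ∧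
      (pinv (SVT l A) * SVT l A) * (pinv (SVT l A) * SVT l A) = pinv (SVT l A) * SVT l A ∧
      (pinv (SVT l A) * SVT l A).rank = (SVT l A).rank) ∧
    -- (2) Π^col_{A^{(λ)}} is an orthogonal projection of rank = rank A^{(λ)}
    ((SVT l A * pinv (SVT l A))ᵀ = SVT l A * pinv (SVT l A) ∧
      (SVT l A * pinv (SVT l A)) * (SVT l A * pinv (SVT l A)) = SVT l A * pinv (SVT l A) ∧
      (SVT l A * pinv (SVT l A)).rank = (SVT l A).rank) ∧
    -- (3) A Π^row_{A^{(λ)}} A† = Π^col_{A^{(λ)}} and A† Π^col_{A^{(λ)}} A = Π^row_{A^{(λ)}}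
    (A * (pinv (SVT l A) * SVT l A) * pinv A = SVT l A * pinv (SVT l A) ∧
      pinv A * (SVT l A * pinv (SVT l A)) * A = pinv (SVT l A) * SVT l A) :=
  svt_projection_properties_general A l

end FrechetPCR
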